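/- There is a dimensional constant C = 4√N + 1 such that for any 1-Lipschitz u : εℤ^N → ℝ with {u < 0} and {u ≥ 0} nonempty, and any i ∈ εℤ^N with u_i ≥ 0, one has sd⁺[u]_i ≤ dist(i, {j ∈ εℤ^N : u_j < 0}) ≤ sd⁺[u]_i + Cε. -/

import Mathlib

/-!
Walk from `i` towards a lattice point `k` with `u k < 0` along the segment, in steps of length at
most `ε`, rounding each step to the lattice. The first rounded point `m` with `u m < 0` follows one
where `u ≥ 0`, so the Lipschitz bound gives `u m ≥ -(√N + 1) ε`; and `m` is within `√N ε` of being
on the segment. Hence `dist(i, {u < 0}) ≤ u k + |k - i| + (2√N + 1) ε` for every such `k`, that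
is `dist(i, {u < 0}) ≤ d⁺[u]_i + (2√N + 1) ε`, while `d⁺[u]_i ≤ sd⁺[u]_i` (take `j = i`). The lower
bound is the triangle inequality `d⁺[u]_j - |j - i| ≤ u_k + |k - i| ≤ |k - i|`.
-/

noncomputable section

def pt (N : ℕ) (ε : ℝ) (i : Fin N → ℤ) : EuclideanSpace ℝ (Fin N) :=
  (WithLp.equiv 2 (Fin N → ℝ)).symm fun n => ε * (i n)

def LatLip (N : ℕ) (ε : ℝ) (u : (Fin N → ℤ) → ℝ) : Prop :=
  ∀ i j, |u i - u j| ≤ ‖pt N ε i - pt N ε j‖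

def dplus (N : ℕ) (ε : ℝ) (u : (Fin N → ℤ) → ℝ) (i : Fin N → ℤ) : ℝ :=
  sInf {x | ∃ j, u j < 0 ∧ x = u j + ‖pt N ε j - pt N ε i‖}

def sdplus (N : ℕ) (ε : ℝ) (u : (Fin N → ℤ) → ℝ) (i : Fin N → ℤ) : ℝ :=
  sSup {x | ∃ j, 0 ≤ u j ∧ x = dplus N ε u j - ‖pt N ε j - pt N ε i‖}

/-- `dist(i, {j : u_j < 0})` on the lattice. -/
def latDist (N : ℕ) (ε : ℝ) (u : (Fin N → ℤ) → ℝ) (i : Fin N → ℤ) : ℝ :=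
  sInf {x | ∃ j, u j < 0 ∧ x = ‖pt N ε i - pt N ε j‖}

lemma EuclideanSpace.norm_le_sqrt_card_mul {ι : Type*} [Fintype ι] (v : EuclideanSpace ℝ ι)
    {c : ℝ} (hc : 0 ≤ c) (h : ∀ n, |v n| ≤ c) : ‖v‖ ≤ √(Fintype.card ι) * c := by
  rw [EuclideanSpace.norm_eq, ← Real.sqrt_sq hc, ← Real.sqrt_mul (Nat.cast_nonneg _)]
  gcongr
  calc ∑ n, ‖v n‖ ^ 2 ≤ ∑ _n : ι, c ^ 2 := by
        gcongr with n
        exact h n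
    _ = Fintype.card ι * c ^ 2 := by simp

lemma Nat.exists_lt_not_and_succ {P : ℕ → Prop} {T : ℕ} (h0 : ¬P 0) (hT : P T) :
    ∃ s < T, ¬P s ∧ P (s + 1) := by
  induction T with
  | zero => exact absurd hT h0
  | succ T ih =>
    by_cases hP : P T
    · obtain ⟨s, hs, hs'⟩ := ih hP
      exact ⟨s, by omega, hs'⟩
    · exact ⟨T, T.lt_succ_self, hP, hT⟩

section Lattice

variable {N : ℕ} {ε : ℝ} {u : (Fin N → ℤ) → ℝ}

def latRound (N : ℕ) (ε : ℝ) (y : EuclideanSpace ℝ (Fin N)) : Fin N → ℤ :=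
  fun n => round (y n / ε)

lemma latRound_pt (hε : ε ≠ 0) (i : Fin N → ℤ) : latRound N ε (pt N ε i) = i := by
  funext n
  simp [latRound, pt, hε]

lemma dist_pt_latRound_le (hε : 0 < ε) (y : EuclideanSpace ℝ (Fin N)) :
    dist (pt N ε (latRound N ε y)) y ≤ √N * (ε / 2) := by
  have hcoord (n : Fin N) : |(pt N ε (latRound N ε y) - y) n| ≤ ε / 2 := by
    have hn : (pt N ε (latRound N ε y) - y) n = ε * (round (y n / ε) - y n / ε) := by
      simp [pt, latRound]
      field_simp
    rw [hn, abs_mul, abs_of_pos hε, abs_sub_comm]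
    linarith [mul_le_mul_of_nonneg_left (abs_sub_round (y n / ε)) hε.le]
  simpa [dist_eq_norm] using EuclideanSpace.norm_le_sqrt_card_mul _ (by positivity) hcoord

lemma exists_crossing_near_segment (hε : 0 < ε) {i k : Fin N → ℤ} (hi : 0 ≤ u i) (hk : u k < 0) :
    ∃ m m', 0 ≤ u m' ∧ u m < 0 ∧ dist (pt N ε m') (pt N ε m) ≤ (√N + 1) * ε ∧
      dist (pt N ε i) (pt N ε m) + dist (pt N ε m) (pt N ε k) ≤
        dist (pt N ε i) (pt N ε k) + √N * ε := by
  set a := pt N ε i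
  set b := pt N ε k
  obtain ⟨T, hTpos, hD⟩ : ∃ T : ℕ, 0 < T ∧ dist a b ≤ ε * T := by
    refine ⟨⌈dist a b / ε⌉₊ + 1, by omega, ?_⟩
    rw [← div_le_iff₀' hε]
    exact (Nat.le_ceil _).trans (by simp)
  have hT : (0 : ℝ) < T := by exact_mod_cast hTpos
  set y : ℕ → EuclideanSpace ℝ (Fin N) := fun t => AffineMap.lineMap a b ((t : ℝ) / T) with hy
  set m : ℕ → Fin N → ℤ := fun t => latRound N ε (y t) with hm
  have hm0 : m 0 = i := by simp [hm, hy, a, latRound_pt hε.ne']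
  have hmT : m T = k := by
    simp only [hm, hy]
    rw [div_self hT.ne', AffineMap.lineMap_apply_one, latRound_pt hε.ne']
  obtain ⟨s, hsT, hs, hs1⟩ := Nat.exists_lt_not_and_succ (P := fun t => u (m t) < 0)
    (by rwa [hm0, not_lt]) (by rwa [hmT])
  have hround (t : ℕ) : dist (pt N ε (m t)) (y t) ≤ √N * (ε / 2) := dist_pt_latRound_le hε _
  have hstep : dist (y s) (y (s + 1)) ≤ ε := by
    rw [hy, dist_lineMap_lineMap, Real.dist_eq, ← sub_div, abs_div, abs_of_pos hT]
    push_cast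
    rw [show (s : ℝ) - (s + 1) = -1 by ring, abs_neg, abs_one, div_mul_eq_mul_div, one_mul,
      div_le_iff₀ hT]
    exact hD
  have hbtw : Wbtw ℝ a (y (s + 1)) b :=
    ⟨_, ⟨by positivity, (div_le_one hT).2 (by exact_mod_cast hsT)⟩, rfl⟩
  refine ⟨m (s + 1), m s, not_lt.1 hs, hs1, ?_, ?_⟩
  · calc dist (pt N ε (m s)) (pt N ε (m (s + 1)))
        ≤ dist (pt N ε (m s)) (y s) + dist (y s) (y (s + 1)) +
            dist (y (s + 1)) (pt N ε (m (s + 1))) := dist_triangle4 _ _ _ _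
      _ ≤ √N * (ε / 2) + ε + √N * (ε / 2) := by
          have := hround (s + 1)
          rw [dist_comm] at this
          linarith [hround s]
      _ = (√N + 1) * ε := by ring
  · have hseg := hbtw.dist_add_dist
    have hr := hround (s + 1)
    have h₁ := dist_triangle a (y (s + 1)) (pt N ε (m (s + 1)))
    have h₂ := dist_triangle (pt N ε (m (s + 1))) (y (s + 1)) b
    rw [dist_comm (y (s + 1))] at h₁
    linarith

lemma LatLip.sub_le_norm (hLip : LatLip N ε u) (i j : Fin N → ℤ) :
    u i - u j ≤ ‖pt N ε i - pt N ε j‖ :=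
  (le_abs_self _).trans (hLip i j)

lemma exists_neg_norm_le (hε : 0 < ε) (hLip : LatLip N ε u) {i k : Fin N → ℤ} (hi : 0 ≤ u i)
    (hk : u k < 0) :
    ∃ m, u m < 0 ∧ ‖pt N ε i - pt N ε m‖ ≤ u k + ‖pt N ε k - pt N ε i‖ + (2 * √N + 1) * ε := by
  obtain ⟨m, m', hm', hm, hmm', hsum⟩ := exists_crossing_near_segment hε hi hk
  simp only [dist_eq_norm] at hmm' hsum
  have := hLip.sub_le_norm m' m
  have := hLip.sub_le_norm m k
  rw [norm_sub_rev (pt N ε k)]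
  exact ⟨m, hm, by linarith⟩

lemma dplus_le (hLip : LatLip N ε u) (j : Fin N → ℤ) {k : Fin N → ℤ} (hk : u k < 0) :
    dplus N ε u j ≤ u k + ‖pt N ε k - pt N ε j‖ := by
  refine csInf_le ⟨u j, ?_⟩ ⟨k, hk, rfl⟩
  rintro _ ⟨k', -, rfl⟩
  have := hLip.sub_le_norm j k'
  rw [norm_sub_rev] at this
  linarith

lemma latDist_le (i : Fin N → ℤ) {k : Fin N → ℤ} (hk : u k < 0) :
    latDist N ε u i ≤ ‖pt N ε i - pt N ε k‖ := by
  refine csInf_le ⟨0, ?_⟩ ⟨k, hk, rfl⟩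
  rintro _ ⟨_, -, rfl⟩
  exact norm_nonneg _

lemma dplus_le_sdplus (hLip : LatLip N ε u) (hneg : ∃ k, u k < 0) {i : Fin N → ℤ}
    (hi : 0 ≤ u i) : dplus N ε u i ≤ sdplus N ε u i := by
  obtain ⟨k, hk⟩ := hneg
  calc dplus N ε u i = dplus N ε u i - ‖pt N ε i - pt N ε i‖ := by simp
    _ ≤ sdplus N ε u i := by
      refine le_csSup ⟨u k + ‖pt N ε k - pt N ε i‖, ?_⟩ ⟨i, hi, rfl⟩
      rintro _ ⟨j, -, rfl⟩
      have := dplus_le hLip j hk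
      have := norm_sub_le_norm_sub_add_norm_sub (pt N ε k) (pt N ε i) (pt N ε j)
      rw [norm_sub_rev (pt N ε i)] at this
      linarith

lemma sdplus_le_latDist (hLip : LatLip N ε u) (hneg : ∃ k, u k < 0) {i : Fin N → ℤ}
    (hi : 0 ≤ u i) : sdplus N ε u i ≤ latDist N ε u i := by
  obtain ⟨k₀, hk₀⟩ := hneg
  refine csSup_le ⟨_, i, hi, rfl⟩ ?_
  rintro _ ⟨j, -, rfl⟩
  refine le_csInf ⟨_, k₀, hk₀, rfl⟩ ?_
  rintro _ ⟨k, hk, rfl⟩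
  have := dplus_le hLip j hk
  have := norm_sub_le_norm_sub_add_norm_sub (pt N ε k) (pt N ε i) (pt N ε j)
  rw [norm_sub_rev (pt N ε i) (pt N ε j), norm_sub_rev (pt N ε k) (pt N ε i)] at this
  linarith

lemma latDist_le_dplus_add (hε : 0 < ε) (hLip : LatLip N ε u) (hneg : ∃ k, u k < 0)
    {i : Fin N → ℤ} (hi : 0 ≤ u i) :
    latDist N ε u i ≤ dplus N ε u i + (2 * √N + 1) * ε := by
  rw [← sub_le_iff_le_add]
  obtain ⟨k₀, hk₀⟩ := hneg
  refine le_csInf ⟨_, k₀, hk₀, rfl⟩ ?_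
  rintro _ ⟨k, hk, rfl⟩
  obtain ⟨m, hm, hdist⟩ := exists_neg_norm_le hε hLip hi hk
  have := latDist_le (ε := ε) i hm
  linarith

end Lattice

theorem stmt4_general (N : ℕ) (ε : ℝ) (hε : 0 < ε)
    (u : (Fin N → ℤ) → ℝ) (hLip : LatLip N ε u)
    (hneg : ∃ j, u j < 0) :
    ∀ i, 0 ≤ u i →
      sdplus N ε u i ≤ latDist N ε u i ∧
      latDist N ε u i ≤ sdplus N ε u i + (4 * Real.sqrt N + 1) * ε := by
  intro i hi
  refine ⟨sdplus_le_latDist hLip hneg hi, ?_⟩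
  have hC : (2 * √N + 1) * ε ≤ (4 * √N + 1) * ε := by
    gcongr
    linarith [Real.sqrt_nonneg N]
  linarith [latDist_le_dplus_add hε hLip hneg hi, dplus_le_sdplus hLip hneg hi]

theorem stmt4 (N : ℕ) (hN : 1 ≤ N) (ε : ℝ) (hε : 0 < ε)
    (u : (Fin N → ℤ) → ℝ) (hLip : LatLip N ε u)
    (hneg : ∃ j, u j < 0) (hpos : ∃ j, 0 ≤ u j) :
    ∀ i, 0 ≤ u i →
      sdplus N ε u i ≤ latDist N ε u i ∧
      latDist N ε u i ≤ sdplus N ε u i + (4 * Real.sqrt N + 1) * ε :=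
  stmt4_general N ε hε u hLip hneg
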